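/- arXiv:2510.10882 — 2 statements merged into one kernel-verified Lean document; each statement's English description precedes it below -/
import Mathlib

section
/- There is a set 𝒜 of free actions of ℤ on Cantor spaces with the cardinality of the continuum which is an antichain under weak containment: for all distinct a, b ∈ 𝒜, neither a weakly contains b nor b weakly contains a. (One may take 𝒜 to consist of the diagonal translation actions a_S of ℤ on ∏_{p∈S} ℤ/pℤ, as S ranges over a family of continuum many infinite sets of primes with pairwise nonempty set differences.) -/
noncomputable section AuxStmt15

/-- Homeomorphism between discrete spaces from an equiv. -/
def discHomeo {X Y : Type*} [TopologicalSpace X] [TopologicalSpace Y]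
    [DiscreteTopology X] [DiscreteTopology Y] (e : X ≃ Y) : X ≃ₜ Y :=
  ⟨e, continuous_of_discreteTopology, continuous_of_discreteTopology⟩

/-- Prepending a bit to a Cantor sequence. -/
def consHomeo : Bool × (ℕ → Bool) ≃ₜ (ℕ → Bool) where
  toFun p n := Nat.casesOn n p.1 p.2
  invFun f := (f 0, fun n => f (n + 1))
  left_inv := by rintro ⟨b, f⟩; rfl
  right_inv := by intro f; funext n; cases n <;> rfl
  continuous_toFun := by
    apply continuous_pi
    intro n
    cases n with
    | zero => exact continuous_fst
    | succ m => exact (continuous_apply m).comp continuous_snd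
  continuous_invFun :=
    (continuous_apply 0).prodMk (continuous_pi fun n => continuous_apply (n + 1))

/-- Cantor plus Cantor is Cantor. -/
def sumCC : (ℕ → Bool) ⊕ (ℕ → Bool) ≃ₜ (ℕ → Bool) :=
  ((Homeomorph.sumCongr (Homeomorph.punitProd _).symm (Homeomorph.punitProd _).symm).trans
    Homeomorph.sumProdDistrib.symm).trans
    ((Homeomorph.prodCongr (discHomeo Equiv.boolEquivPUnitSumPUnit.{0,0}.symm)
      (Homeomorph.refl _)).trans consHomeo)

/-- `Fin m × Cantor` is Cantor for `m ≥ 1`. -/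
def finProdCantor : (m : ℕ) → 0 < m → (Fin m × (ℕ → Bool)) ≃ₜ (ℕ → Bool)
  | 1, _ =>
    (Homeomorph.prodCongr (discHomeo (Equiv.equivPUnit.{1,1} (Fin 1))) (Homeomorph.refl _)).trans
      (Homeomorph.punitProd _)
  | (m + 2), _ =>
    (Homeomorph.prodCongr (discHomeo (finSumFinEquiv (m := m + 1) (n := 1)).symm)
        (Homeomorph.refl _)).trans <|
      Homeomorph.sumProdDistrib.trans <|
        (Homeomorph.sumCongr (finProdCantor (m + 1) (Nat.succ_pos _))
          ((Homeomorph.prodCongr (discHomeo (Equiv.equivPUnit.{1,1} (Fin 1)))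
            (Homeomorph.refl _)).trans (Homeomorph.punitProd _))).trans sumCC

/-- Splitting a pi of products. -/
def prodPiHomeo {α β : ℕ → Type*} [∀ n, TopologicalSpace (α n)] [∀ n, TopologicalSpace (β n)] :
    (∀ n, α n × β n) ≃ₜ (∀ n, α n) × (∀ n, β n) where
  toFun z := (fun n => (z n).1, fun n => (z n).2)
  invFun p n := (p.1 n, p.2 n)
  left_inv z := rfl
  right_inv p := rfl
  continuous_toFun :=
    (continuous_pi fun n => (continuous_apply n).fst).prodMk
      (continuous_pi fun n => (continuous_apply n).snd)
  continuous_invFun :=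
    continuous_pi fun n =>
      ((continuous_apply n).comp continuous_fst).prodMk ((continuous_apply n).comp continuous_snd)

/-- Currying. -/
def curryHomeo : (ℕ × ℕ → Bool) ≃ₜ (∀ _ : ℕ, ℕ → Bool) where
  toFun f n m := f (n, m)
  invFun g p := g p.1 p.2
  left_inv f := rfl
  right_inv g := rfl
  continuous_toFun := continuous_pi fun n => continuous_pi fun m => continuous_apply (n, m)
  continuous_invFun := continuous_pi fun p => (continuous_apply p.2).comp (continuous_apply p.1)

/-- Cantor is a countable power of itself. -/
def cantorPow : (ℕ → Bool) ≃ₜ ∀ _ : ℕ, (ℕ → Bool) :=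
  (Homeomorph.piCongrLeft (Y := fun _ : ℕ => Bool)
    (Denumerable.eqv (ℕ × ℕ))).symm.trans curryHomeo

/-- The big homeomorphism: a product of padded finite cyclic groups is Cantor. -/
def bigHomeo (q : ℕ → ℕ) (hq : ∀ n, 0 < q n) : (∀ n, Fin (q n) × Bool) ≃ₜ (ℕ → Bool) :=
  prodPiHomeo.trans <|
    (Homeomorph.prodCongr (Homeomorph.refl _) cantorPow).trans <|
      (prodPiHomeo (α := fun n => Fin (q n)) (β := fun _ => ℕ → Bool)).symm.trans <|
        (Homeomorph.piCongrRight fun n => finProdCantor (q n) (hq n)).trans cantorPow.symm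

end AuxStmt15

/-- An action of `ℤ` by homeomorphisms on a Cantor space. -/
structure CantorFlowZ where
  X : Type
  [ts : TopologicalSpace X]
  cantor : Nonempty (X ≃ₜ (ℕ → Bool))
  act : ℤ → X → X
  act_zero : ∀ x, act 0 x = x
  act_add : ∀ m n x, act (m + n) x = act m (act n x)
  act_cont : ∀ n, Continuous (act n)

attribute [instance] CantorFlowZ.ts

/-- The set of `W`-local patterns of a labelling `f : X → Fin k` with respect to a
`ℤ`-action. -/
def labelPatternZ {X : Type*} (a : ℤ → X → X) (W : Finset ℤ) {k : ℕ}
    (f : X → Fin k) : Set ({n // n ∈ W} → Fin k) :=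
  {p | ∃ x : X, ∀ n : {n // n ∈ W}, f (a n.1 x) = p n}

/-- `a` weakly contains `b`. -/
def CantorFlowZ.WeakCont (a b : CantorFlowZ) : Prop :=
  ∀ (W : Finset ℤ) (k : ℕ) (f : b.X → Fin k), Continuous f →
    ∃ g : a.X → Fin k, Continuous g ∧ labelPatternZ b.act W f = labelPatternZ a.act W g

/-- `a` is a free `ℤ`-action. -/
def CantorFlowZ.Free (a : CantorFlowZ) : Prop :=
  ∀ (n : ℤ) (x : a.X), a.act n x = x → n = 0
section Flows

open Fin.CommRing

open Classical in
/-- The modulus sequence attached to a set of indices. -/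
noncomputable def qof (S : Set ℕ) (n : ℕ) : ℕ :=
  if n ∈ S then Nat.nth Nat.Prime n else 1

lemma qof_pos (S : Set ℕ) (n : ℕ) : 0 < qof S n := by
  unfold qof
  split
  · exact (Nat.prime_nth_prime n).pos
  · exact Nat.one_pos

lemma qof_mem {S : Set ℕ} {n : ℕ} (h : n ∈ S) : qof S n = Nat.nth Nat.Prime n := if_pos h

lemma qof_not_mem {S : Set ℕ} {n : ℕ} (h : n ∉ S) : qof S n = 1 := if_neg h

/-- Adding an integer in `Fin m`. -/
noncomputable def addInt {m : ℕ} (h : 0 < m) (k : ℤ) (v : Fin m) : Fin m :=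
  letI : NeZero m := ⟨h.ne'⟩
  v + (k : Fin m)

lemma addInt_zero {m : ℕ} (h : 0 < m) (v : Fin m) : addInt h 0 v = v := by
  letI : NeZero m := ⟨h.ne'⟩
  simp [addInt]

lemma addInt_add {m : ℕ} (h : 0 < m) (a b : ℤ) (v : Fin m) :
    addInt h (a + b) v = addInt h a (addInt h b v) := by
  letI : NeZero m := ⟨h.ne'⟩
  simp only [addInt, Int.cast_add]
  ring

/-- The translation flow attached to a set of indices. -/
noncomputable def flowOf (S : Set ℕ) : CantorFlowZ where
  X := ∀ n, Fin (qof S n) × Bool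
  cantor := ⟨bigHomeo _ (qof_pos S)⟩
  act k z := fun n => (addInt (qof_pos S n) k (z n).1, (z n).2)
  act_zero z := by funext n; simp [addInt_zero]
  act_add a b z := by funext n; simp [addInt_add]
  act_cont k := continuous_pi fun n =>
    (continuous_of_discreteTopology
      (f := fun v : Fin (qof S n) × Bool => (addInt (qof_pos S n) k v.1, v.2))).comp
      (continuous_apply n)

lemma flowOf_free {S : Set ℕ} (hS : S.Infinite) : (flowOf S).Free := by
  intro n z h
  by_contra hn
  obtain ⟨m, hmS, hm⟩ := hS.exists_gt n.natAbs
  have h1 := congrFun h m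
  have h2 : addInt (qof_pos S m) n (z m).1 = (z m).1 := congrArg Prod.fst h1
  set p := qof S m with hp
  haveI : NeZero p := ⟨(qof_pos S m).ne'⟩
  have h3 : ((n : Fin p)) = 0 := by
    have := h2
    simp only [addInt] at this
    exact left_eq_add.mp this.symm
  have h4 : (p : ℤ) ∣ n := (CharP.intCast_eq_zero_iff (Fin p) p n).mp h3
  have h5 : p ∣ n.natAbs := Int.natAbs_dvd_natAbs.mpr (by simpa using h4)
  have h6 : p ≤ n.natAbs := Nat.le_of_dvd (Int.natAbs_pos.mpr hn) h5
  have h7 : m ≤ p := by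
    rw [hp, qof_mem hmS]
    exact (Nat.nth_strictMono Nat.infinite_setOf_prime).le_apply
  omega

/-- Locality: a continuous map from a product of finite discrete spaces to a discrete
space depends on finitely many coordinates. -/
lemma exists_locality {Y : ℕ → Type} [∀ n, TopologicalSpace (Y n)] [∀ n, DiscreteTopology (Y n)]
    [∀ n, Finite (Y n)] {k : ℕ} {g : (∀ n, Y n) → Fin k} (hg : Continuous g) :
    ∃ N : ℕ, ∀ z w : ∀ n, Y n, (∀ m, m < N → z m = w m) → g z = g w := by
  have key : ∀ z : ∀ n, Y n, ∃ I : Finset ℕ, ∀ w, (∀ m ∈ I, w m = z m) → g w = g z := by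
    intro z
    have hopen : IsOpen (g ⁻¹' {g z}) := (isOpen_discrete _).preimage hg
    rcases isOpen_pi_iff.mp hopen z rfl with ⟨I, u, hu, hsub⟩
    refine ⟨I, fun w hw => hsub fun i hi => ?_⟩
    rw [hw i hi]
    exact (hu i hi).2
  choose I hI using key
  have hVopen : ∀ z, IsOpen {w : ∀ n, Y n | ∀ m ∈ I z, w m = z m} := by
    intro z
    have : {w : ∀ n, Y n | ∀ m ∈ I z, w m = z m} =
        ⋂ m ∈ I z, (fun w : ∀ n, Y n => w m) ⁻¹' {z m} := by
      ext w; simp [Set.mem_iInter]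
    rw [this]
    exact isOpen_biInter_finset fun m _ => (isOpen_discrete _).preimage (continuous_apply m)
  have hcover : (Set.univ : Set (∀ n, Y n)) ⊆ ⋃ z, {w | ∀ m ∈ I z, w m = z m} :=
    fun z _ => Set.mem_iUnion.2 ⟨z, fun m _ => rfl⟩
  obtain ⟨t, ht⟩ := isCompact_univ.elim_finite_subcover _ hVopen hcover
  refine ⟨t.sup fun z => (I z).sup id + 1, fun z w hzw => ?_⟩
  have hz := ht (Set.mem_univ z)
  rw [Set.mem_iUnion₂] at hz
  obtain ⟨c, hct, hzc⟩ := hz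
  have hwc : ∀ m ∈ I c, w m = c m := by
    intro m hm
    have hmN : m < t.sup fun z => (I z).sup id + 1 := by
      have h1 : m ≤ (I c).sup id := Finset.le_sup (f := id) hm
      have h2 : (I c).sup id + 1 ≤ t.sup fun z => (I z).sup id + 1 :=
        Finset.le_sup (f := fun z => (I z).sup id + 1) hct
      omega
    rw [← hzw m hmN]
    exact hzc m hm
  rw [hI c z hzc, hI c w hwc]

end Flows
section Main

open Fin.CommRing

lemma not_weakCont {S T : Set ℕ} {n₀ : ℕ} (hS : n₀ ∈ S) (hT : n₀ ∉ T) :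
    ¬ (flowOf T).WeakCont (flowOf S) := by
  intro h
  have hk : qof S n₀ = Nat.nth Nat.Prime n₀ := qof_mem hS
  have hkp : Nat.Prime (qof S n₀) := hk ▸ Nat.prime_nth_prime n₀
  haveI : NeZero (qof S n₀) := ⟨hkp.pos.ne'⟩
  set k := qof S n₀ with hkdef
  -- the labelling on flowOf S
  let f : (flowOf S).X → Fin k := fun z => (z n₀).1
  have hf : Continuous f := continuous_fst.comp (continuous_apply n₀)
  have h0 : (0 : ℤ) ∈ ({0, 1} : Finset ℤ) := by simp
  have h1 : (1 : ℤ) ∈ ({0, 1} : Finset ℤ) := by simp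
  obtain ⟨g, hgc, hpat⟩ := h ({0, 1} : Finset ℤ) k f hf
  -- all patterns of f satisfy pat 1 = pat 0 + 1
  have hfpat : ∀ pat ∈ labelPatternZ (flowOf S).act ({0, 1} : Finset ℤ) f,
      pat ⟨1, h1⟩ = pat ⟨0, h0⟩ + 1 := by
    rintro pat ⟨z, hz⟩
    rw [← hz ⟨1, h1⟩, ← hz ⟨0, h0⟩]
    show f ((flowOf S).act 1 z) = f ((flowOf S).act 0 z) + 1
    rw [(flowOf S).act_zero]
    show addInt (qof_pos S n₀) 1 (z n₀).1 = (z n₀).1 + 1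
    simp [addInt]
  -- hence g rotates by 1
  have hgstep : ∀ w, g ((flowOf T).act 1 w) = g w + 1 := by
    intro w
    have mem : (fun n : {n // n ∈ ({0, 1} : Finset ℤ)} => g ((flowOf T).act n.1 w)) ∈
        labelPatternZ (flowOf T).act ({0, 1} : Finset ℤ) g := ⟨w, fun n => rfl⟩
    rw [← hpat] at mem
    have := hfpat _ mem
    simpa [(flowOf T).act_zero] using this
  have hgiter : ∀ (M : ℕ) (w : (flowOf T).X),
      g ((flowOf T).act (M : ℤ) w) = g w + (M : Fin k) := by
    intro M
    induction M with
    | zero => intro w; simp [(flowOf T).act_zero]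
    | succ M ih =>
      intro w
      have e : ((M + 1 : ℕ) : ℤ) = (M : ℤ) + 1 := by push_cast; ring
      rw [e, (flowOf T).act_add, ih, hgstep]
      push_cast
      ring
  -- locality
  obtain ⟨N, hN⟩ := exists_locality (Y := fun n => Fin (qof T n) × Bool) hgc
  set M : ℕ := ∏ m ∈ Finset.range N, qof T m with hMdef
  have hw : (flowOf T).X := fun n => (⟨0, qof_pos T n⟩, false)
  have hfix : ∀ m, m < N → ((flowOf T).act (M : ℤ) hw) m = hw m := by
    intro m hm
    show (addInt (qof_pos T m) (M : ℤ) (hw m).1, (hw m).2) = hw m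
    have hdvd : qof T m ∣ M := Finset.dvd_prod_of_mem _ (Finset.mem_range.2 hm)
    haveI : NeZero (qof T m) := ⟨(qof_pos T m).ne'⟩
    have : ((M : ℤ) : Fin (qof T m)) = 0 := by
      rw [Int.cast_natCast]
      exact Fin.natCast_eq_zero.mpr hdvd
    simp [addInt, Int.cast_natCast, Fin.natCast_eq_zero.mpr hdvd]
  have heq : g ((flowOf T).act (M : ℤ) hw) = g hw :=
    hN _ _ fun m hm => hfix m hm
  rw [hgiter M hw] at heq
  have hM0 : (M : Fin k) = 0 := by
    have := heq.symm
    exact left_eq_add.mp this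
  have hdvd : k ∣ M := Fin.natCast_eq_zero.mp hM0
  obtain ⟨m, hmr, hdm⟩ := hkp.prime.exists_mem_finset_dvd hdvd
  by_cases hmT : m ∈ T
  · rw [qof_mem hmT] at hdm
    have : k = Nat.nth Nat.Prime m :=
      (Nat.prime_dvd_prime_iff_eq hkp (Nat.prime_nth_prime m)).mp hdm
    have : n₀ = m := Nat.nth_injective Nat.infinite_setOf_prime (hk ▸ this)
    exact hT (this ▸ hmT)
  · rw [qof_not_mem hmT] at hdm
    exact hkp.one_lt.ne' (Nat.dvd_one.mp hdm)

end Main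
section Family

/-- Code of the length-`n` prefix of `x`. -/
def preCode (x : ℕ → Bool) (n : ℕ) : ℕ :=
  Encodable.encode (List.ofFn fun i : Fin n => x i)

lemma preCode_inj (x : ℕ → Bool) : Function.Injective (preCode x) := by
  intro a b h
  have h2 := Encodable.encode_injective h
  have := congrArg List.length h2
  simpa using this

/-- The set of prefix codes of `x`. -/
def Dset (x : ℕ → Bool) : Set ℕ := Set.range (preCode x)

lemma Dset_infinite (x : ℕ → Bool) : (Dset x).Infinite :=
  Set.infinite_range_of_injective (preCode_inj x)

lemma Dset_diff {x y : ℕ → Bool} (h : x ≠ y) : ((Dset x) \ (Dset y)).Nonempty := by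
  obtain ⟨n, hn⟩ := Function.ne_iff.mp h
  refine ⟨preCode x (n + 1), ⟨n + 1, rfl⟩, ?_⟩
  rintro ⟨m, hm⟩
  have h2 := Encodable.encode_injective hm
  have hlen : m = n + 1 := by simpa using congrArg List.length h2
  subst hlen
  have h3 : (fun i : Fin (n + 1) => y i) = fun i : Fin (n + 1) => x i :=
    List.ofFn_inj.mp h2
  exact hn (congrFun h3 ⟨n, Nat.lt_succ_self n⟩).symm

lemma weakCont_refl (a : CantorFlowZ) : a.WeakCont a :=
  fun _ _ f hf => ⟨f, hf, rfl⟩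

end Family

/-- There is a continuum-sized antichain of free `ℤ`-actions on Cantor spaces under weak
containment. -/
theorem stmt15 :
    ∃ 𝒜 : Set CantorFlowZ, Cardinal.mk 𝒜 = Cardinal.continuum ∧
      (∀ a ∈ 𝒜, a.Free) ∧
      ∀ a ∈ 𝒜, ∀ b ∈ 𝒜, a ≠ b → ¬ a.WeakCont b ∧ ¬ b.WeakCont a := by
  refine ⟨Set.range (fun x : ℕ → Bool => flowOf (Dset x)), ?_, ?_, ?_⟩
  · -- cardinality
    have hinj : Function.Injective (fun x : ℕ → Bool => flowOf (Dset x)) := by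
      intro x y hxy
      by_contra hne
      obtain ⟨n₀, hnx, hny⟩ := Dset_diff hne
      have hxy' : flowOf (Dset x) = flowOf (Dset y) := hxy
      exact not_weakCont hnx hny (hxy' ▸ weakCont_refl (flowOf (Dset x)))
    have h1 := Cardinal.mk_range_eq_of_injective hinj
    rw [Cardinal.lift_uzero] at h1
    have h2 : Cardinal.mk (ℕ → Bool) = 2 ^ Cardinal.aleph0 := by
      simp [Cardinal.mk_arrow]
    rw [h1, h2, Cardinal.two_power_aleph0, Cardinal.lift_continuum]
  · rintro a ⟨x, rfl⟩
    exact flowOf_free (Dset_infinite x)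
  · rintro a ⟨x, rfl⟩ b ⟨y, rfl⟩ hab
    have hxy : x ≠ y := by rintro rfl; exact hab rfl
    obtain ⟨n₀, hnx, hny⟩ := Dset_diff hxy
    obtain ⟨n₁, hny', hnx'⟩ := Dset_diff hxy.symm
    exact ⟨not_weakCont hny' hnx', not_weakCont hnx hny⟩
end

section
/- Let S be a set of prime numbers and let p be a prime with p ∉ S. Endow ∏_{q∈S} ℤ/qℤ with the product topology and the ℤ-action in which 1 ∈ ℤ acts by adding 1 in every coordinate, and endow the finite discrete space ℤ/pℤ with the ℤ-action in which 1 acts by adding 1. Then there is no continuous ℤ-equivariant map from ∏_{q∈S} ℤ/qℤ to ℤ/pℤ. -/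
/-- Let `S` be a set of primes and `p ∉ S` a prime. There is no continuous `ℤ`-equivariant
map from `∏_{q ∈ S} ℤ/qℤ` (with the product topology and the diagonal `+1` action) to
`ℤ/pℤ` (discrete, with the `+1` action). -/
theorem stmt16 (S : Set ℕ) (hS : ∀ q ∈ S, Nat.Prime q)
    (p : ℕ) (hp : Nat.Prime p) (hpS : p ∉ S) :
    ¬ ∃ f : (∀ q : S, ZMod q) → ZMod p,
        Continuous f ∧
        ∀ (n : ℤ) (x : ∀ q : S, ZMod q),
          f (fun q => x q + (n : ZMod q)) = f x + (n : ZMod p) := by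
  haveI : Fact p.Prime := ⟨hp⟩
  rintro ⟨f, hf, heq⟩
  -- the preimage of {f 0} is open and contains 0
  have hopen : IsOpen (f ⁻¹' {f 0}) := hf.isOpen_preimage _ (isOpen_discrete _)
  obtain ⟨I, u, hu, hsub⟩ := isOpen_pi_iff.mp hopen 0 rfl
  -- N = product of the primes in I
  set N : ℕ := ∏ q ∈ I, (q : ℕ) with hN
  have hNp : (N : ZMod p) ≠ 0 := by
    simp only [Ne, ZMod.natCast_eq_zero_iff]
    intro hdvd
    obtain ⟨q, hqI, hq⟩ := (hp.prime.dvd_finset_prod_iff _).mp hdvd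
    have hqprime := hS q q.2
    have : p = (q : ℕ) := ((Nat.prime_dvd_prime_iff_eq hp hqprime).mp hq)
    exact hpS (this ▸ q.2)
  -- choose n ≡ 1 mod p, n ≡ 0 mod N
  set m : ℕ := ((N : ZMod p)⁻¹).val with hm
  set n : ℕ := N * m with hn
  have hnp : (n : ZMod p) = 1 := by
    have hv : ((m : ℕ) : ZMod p) = ((N : ZMod p))⁻¹ := by
      simp [hm, ZMod.natCast_val, ZMod.cast_id]
    simp only [hn, Nat.cast_mul, hv]
    exact mul_inv_cancel₀ hNp
  -- the translated point lies in the basic open set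
  set x1 : ∀ q : S, ZMod q := fun q => (((n : ℕ) : ℤ) : ZMod q) with hx1
  have hx : x1 ∈ Set.pi (↑I : Set ↑S) u := by
    intro q hqI
    have hqprime := hS q q.2
    haveI : NeZero (q : ℕ) := ⟨hqprime.pos.ne'⟩
    have hdvd : (q : ℕ) ∣ n := Dvd.dvd.mul_right (Finset.dvd_prod_of_mem _ hqI) m
    have h0 : x1 q = 0 := by
      simp only [hx1]
      push_cast
      exact (ZMod.natCast_eq_zero_iff _ _).mpr hdvd
    rw [h0]
    exact (hu q hqI).2
  have hfx : f x1 = f 0 := hsub hx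
  have key := heq ((n : ℕ) : ℤ) 0
  simp only [Pi.zero_apply, zero_add] at key
  have : f x1 = f 0 + (((n : ℕ) : ℤ) : ZMod p) := key
  rw [hfx] at this
  have h1 : (((n : ℕ) : ℤ) : ZMod p) = 1 := by push_cast; exact hnp
  rw [h1] at this
  exact one_ne_zero (left_eq_add.mp this)
end
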